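/- arXiv:1210.7475 — 3 statements merged into one kernel-verified Lean document; each statement's English description precedes it below -/
import Mathlib

section
/- If f and g are almost homomorphisms from ℤ to ℤ, then the composition f ∘ g is an almost homomorphism. -/
/-! Write `g (p + q) = g p + g q + e`, where the defect `e` of `g` ranges over a bounded, hence
finite, set of integers, on which `f` is bounded. Then `f (g (p + q)) - f (g p) - f (g q)` is the
sum of two defects of `f` and the bounded term `f e`. -/

def AlmostHom (f : ℤ → ℤ) : Prop := ∃ C : ℤ, ∀ p q : ℤ, |f (p + q) - f p - f q| < C

def Bdd (f : ℤ → ℤ) : Prop := ∃ C : ℤ, ∀ p : ℤ, |f p| < C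

lemma Int.exists_abs_apply_le_of_abs_le (f : ℤ → ℤ) (N : ℤ) :
    ∃ M : ℤ, ∀ e : ℤ, |e| ≤ N → |f e| ≤ M := by
  obtain ⟨M, hM⟩ := ((Set.finite_Icc (-N) N).image fun e => |f e|).bddAbove
  exact ⟨M, fun e he => hM ⟨e, abs_le.mp he, rfl⟩⟩

/-- The composition of two almost homomorphisms is an almost homomorphism. -/
theorem almostHom_comp (f g : ℤ → ℤ) (hf : AlmostHom f) (hg : AlmostHom g) :
    AlmostHom (f ∘ g) := by
  obtain ⟨Cf, hCf⟩ := hf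
  obtain ⟨Cg, hCg⟩ := hg
  obtain ⟨M, hM⟩ := Int.exists_abs_apply_le_of_abs_le f Cg
  refine ⟨2 * Cf + M, fun p q => ?_⟩
  set e := g (p + q) - g p - g q
  have hdecomp : f (g (p + q)) - f (g p) - f (g q) =
      (f (g p + g q + e) - f (g p + g q) - f e) + (f (g p + g q) - f (g p) - f (g q)) + f e := by
    rw [show g p + g q + e = g (p + q) by ring]; ring
  calc |(f ∘ g) (p + q) - (f ∘ g) p - (f ∘ g) q|
      ≤ |f (g p + g q + e) - f (g p + g q) - f e| + |f (g p + g q) - f (g p) - f (g q)| + |f e| :=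
        hdecomp ▸ abs_add_three _ _ _
    _ < 2 * Cf + M := by linarith [hCf (g p + g q) e, hCf (g p) (g q), hM e (hCg p q).le]
end

section
/- If f is an almost homomorphism from ℤ to ℤ, then there exists a constant C such that |f(nm) − n·f(m)| ≤ C·|n| for all integers n, m with n ≠ 0. -/
/-!
Telescoping the defect along `(k + 1) • x = k • x + x` gives `|f (k • x) - k * f x| ≤ C * (k + 1)`.
Negative multiples reduce to positive ones: the defect at `(-y, y)` and `|f 0| ≤ C` make
`f (-y)` and `-f y` differ by at most `2 * C`.
-/

section AlmostHom

variable {G : Type*} [AddGroup G] {f : G → ℤ} {C : ℤ}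
  (hC : ∀ p q : G, |f (p + q) - f p - f q| ≤ C)
include hC

lemma abs_map_zero_le : |f 0| ≤ C := by
  simpa using hC 0 0

lemma abs_map_nsmul_sub_le (k : ℕ) (x : G) : |f (k • x) - k * f x| ≤ C * (k + 1) := by
  induction k with
  | zero => simpa using abs_map_zero_le hC
  | succ k ih =>
    have hsplit : f ((k + 1) • x) - ↑(k + 1) * f x
        = (f (k • x + x) - f (k • x) - f x) + (f (k • x) - k * f x) := by
      rw [succ_nsmul]; push_cast; ring
    calc |f ((k + 1) • x) - ↑(k + 1) * f x|
        ≤ |f (k • x + x) - f (k • x) - f x| + |f (k • x) - k * f x| := hsplit ▸ abs_add_le _ _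
      _ ≤ C + C * (k + 1) := add_le_add (hC _ _) ih
      _ = C * (↑(k + 1) + 1) := by push_cast; ring

lemma abs_map_zsmul_sub_le (n : ℤ) (x : G) : |f (n • x) - n * f x| ≤ C * (|n| + 3) := by
  obtain ⟨k, rfl | rfl⟩ := Int.eq_nat_or_neg n
  · calc |f ((k : ℤ) • x) - k * f x| ≤ C * (k + 1) := by
          simpa only [natCast_zsmul] using abs_map_nsmul_sub_le hC k x
      _ ≤ C * (|(k : ℤ)| + 3) := by
          have hC₀ := (abs_nonneg _).trans (abs_map_zero_le hC)
          rw [Int.abs_natCast]; gcongr; omega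
  · have hneg := hC (-(k • x)) (k • x)
    rw [neg_add_cancel] at hneg
    have hsplit : f ((-k : ℤ) • x) - (-k) * f x
        = f 0 - (f 0 - f (-(k • x)) - f (k • x)) - (f (k • x) - k * f x) := by
      rw [neg_zsmul, natCast_zsmul]; ring
    calc |f ((-k : ℤ) • x) - (-k) * f x|
        ≤ |f 0| + |f 0 - f (-(k • x)) - f (k • x)| + |f (k • x) - k * f x| :=
          hsplit ▸ (abs_sub _ _).trans (add_le_add (abs_sub _ _) le_rfl)
      _ ≤ C + C + C * (k + 1) :=
          add_le_add (add_le_add (abs_map_zero_le hC) hneg) (abs_map_nsmul_sub_le hC k x)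
      _ = C * (|(-k : ℤ)| + 3) := by rw [abs_neg, Int.abs_natCast]; ring

end AlmostHom

/-- If `f` is an almost homomorphism then `|f (n*m) - n * f m| ≤ C * |n|` for a
suitable constant `C` and all integers `n ≠ 0`, `m`. -/
theorem almostHom_linear_growth (f : ℤ → ℤ)
    (hf : ∃ C : ℤ, ∀ p q : ℤ, |f (p + q) - f p - f q| ≤ C) :
    ∃ C : ℤ, ∀ n m : ℤ, n ≠ 0 → |f (n * m) - n * f m| ≤ C * |n| := by
  obtain ⟨C, hC⟩ := hf
  have hC₀ : 0 ≤ C := (abs_nonneg _).trans (abs_map_zero_le hC)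
  refine ⟨4 * C, fun n m hn => ?_⟩
  have hn₁ : 1 ≤ |n| := Int.one_le_abs hn
  calc |f (n * m) - n * f m| ≤ C * (|n| + 3) := by
        simpa only [smul_eq_mul] using abs_map_zsmul_sub_le hC n m
    _ ≤ 4 * C * |n| := by nlinarith
end

section
/- If f and g are almost homomorphisms from ℤ to ℤ, then f ∘ g − g ∘ f has bounded range; i.e., composition of almost homomorphisms is commutative modulo bounded functions. -/
section Defect

variable {f : ℤ → ℤ} {C : ℤ}

lemma abs_apply_zero_le (hf : ∀ p q, |f (p + q) - f p - f q| ≤ C) : |f 0| ≤ C := by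
  simpa [abs_neg] using hf 0 0

lemma abs_apply_mul_sub_mul_apply_le (hf : ∀ p q, |f (p + q) - f p - f q| ≤ C) (n q : ℤ) :
    |f (n * q) - n * f q| ≤ (|n| + 1) * C := by
  induction n using Int.induction_on with
  | zero => simpa using abs_apply_zero_le hf
  | succ i ih =>
    have hstep := hf (i * q) q
    rw [← add_one_mul] at hstep
    have hi : |(i : ℤ) + 1| = |(i : ℤ)| + 1 := by
      rw [abs_of_nonneg (by omega), abs_of_nonneg (by omega)]
    rw [hi]
    calc |f ((i + 1) * q) - (i + 1) * f q|
        = |(f ((i + 1) * q) - f (i * q) - f q) + (f (i * q) - i * f q)| := by ring_nf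
      _ ≤ _ := abs_add_le _ _
      _ ≤ (|(i : ℤ)| + 1 + 1) * C := by linarith
  | pred i ih =>
    have hstep := hf ((-i - 1) * q) q
    rw [← add_one_mul, sub_add_cancel] at hstep
    have hi : |-(i : ℤ) - 1| = |-(i : ℤ)| + 1 := by
      rw [abs_of_nonpos (by omega), abs_of_nonpos (by omega)]; ring
    rw [hi]
    calc |f ((-i - 1) * q) - (-i - 1) * f q|
        = |(f (-i * q) - -i * f q) - (f (-i * q) - f ((-i - 1) * q) - f q)| := by ring_nf
      _ ≤ _ := abs_sub _ _
      _ ≤ (|-(i : ℤ)| + 1 + 1) * C := by linarith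

lemma abs_apply_le (hf : ∀ p q, |f (p + q) - f p - f q| ≤ C) (p : ℤ) :
    |f p| ≤ (|f 1| + C) * |p| + C := by
  have hlin := abs_apply_mul_sub_mul_apply_le hf p 1
  rw [mul_one] at hlin
  calc |f p| = |(f p - p * f 1) + p * f 1| := by rw [sub_add_cancel]
    _ ≤ |f p - p * f 1| + |p| * |f 1| := by rw [← abs_mul]; exact abs_add_le _ _
    _ ≤ (|f 1| + C) * |p| + C := by linarith

end Defect

lemma abs_mul_comp_sub_comp_le {f g : ℤ → ℤ} {Cf Cg : ℤ}
    (hf : ∀ p q, |f (p + q) - f p - f q| ≤ Cf) (hg : ∀ p q, |g (p + q) - g p - g q| ≤ Cg)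
    (p : ℤ) :
    |p * (f (g p) - g (f p))| ≤ (|p| + |g p| + 2) * Cf + (|p| + |f p| + 2) * Cg := by
  have f₁ := abs_apply_mul_sub_mul_apply_le hf p (g p)
  have f₂ := abs_apply_mul_sub_mul_apply_le hf (g p) p
  have g₁ := abs_apply_mul_sub_mul_apply_le hg p (f p)
  have g₂ := abs_apply_mul_sub_mul_apply_le hg (f p) p
  rw [mul_comm (g p) p] at f₂
  rw [mul_comm (f p) p] at g₂
  calc |p * (f (g p) - g (f p))|
      = |(f (p * g p) - g p * f p) - (f (p * g p) - p * f (g p))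
          - ((g (p * f p) - f p * g p) - (g (p * f p) - p * g (f p)))| := by ring_nf
    _ ≤ |f (p * g p) - g p * f p| + |f (p * g p) - p * f (g p)|
          + (|g (p * f p) - f p * g p| + |g (p * f p) - p * g (f p)|) :=
        (abs_sub _ _).trans (add_le_add (abs_sub _ _) (abs_sub _ _))
    _ ≤ _ := by linarith

lemma Bdd.of_abs_mul_le {h : ℤ → ℤ} {A B : ℤ} (hh : ∀ p, |p * h p| ≤ A * |p| + B) : Bdd h := by
  have hB : 0 ≤ B := by simpa using hh 0
  refine ⟨max (A + B) |h 0| + 1, fun p => ?_⟩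
  rcases eq_or_ne p 0 with rfl | hp
  · linarith [le_max_right (A + B) |h 0|]
  · have hp_pos : 0 < |p| := abs_pos.mpr hp
    have : |p| * |h p| ≤ |p| * (A + B) := by
      rw [← abs_mul]; nlinarith [hh p]
    linarith [le_of_mul_le_mul_left this hp_pos, le_max_left (A + B) |h 0|]

/-- Composition of almost homomorphisms is commutative modulo bounded functions. -/
theorem almostHom_comp_comm_mod_bdd (f g : ℤ → ℤ) (hf : AlmostHom f) (hg : AlmostHom g) :
    Bdd (f ∘ g - g ∘ f) := by
  obtain ⟨Cf, hCf⟩ := hf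
  obtain ⟨Cg, hCg⟩ := hg
  replace hCf : ∀ p q, |f (p + q) - f p - f q| ≤ Cf := fun p q => (hCf p q).le
  replace hCg : ∀ p q, |g (p + q) - g p - g q| ≤ Cg := fun p q => (hCg p q).le
  have hCf₀ : 0 ≤ Cf := (abs_nonneg _).trans (abs_apply_zero_le hCf)
  have hCg₀ : 0 ≤ Cg := (abs_nonneg _).trans (abs_apply_zero_le hCg)
  refine Bdd.of_abs_mul_le (A := (1 + |g 1| + Cg) * Cf + (1 + |f 1| + Cf) * Cg)
    (B := (Cg + 2) * Cf + (Cf + 2) * Cg) fun p => ?_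
  calc |p * (f (g p) - g (f p))|
      ≤ (|p| + |g p| + 2) * Cf + (|p| + |f p| + 2) * Cg := abs_mul_comp_sub_comp_le hCf hCg p
    _ ≤ (|p| + ((|g 1| + Cg) * |p| + Cg) + 2) * Cf
          + (|p| + ((|f 1| + Cf) * |p| + Cf) + 2) * Cg := by
        gcongr
        · exact abs_apply_le hCg p
        · exact abs_apply_le hCf p
    _ = _ := by ring
end
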